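/- Let L be a real symmetric n×n matrix with eigenvalues contained in [0,2] and with 0 an eigenvalue, and let D be similar to q(δ,L) = −(1+2δ)L + δL² for some δ > 0. Then the largest eigenvalue of D is 0, and the second largest eigenvalue λ_{↓2}(D) satisfies q(δ, λ_{↑2}(L)) ≤ λ_{↓2}(D) ≤ max{q(δ, λ_{↑2}(L)), −2}, where λ_{↑2}(L) is the second-smallest eigenvalue of L. -/

import Mathlib

open Matrix Finset

noncomputable def q (δ lam : ℝ) : ℝ := -(1 + 2 * δ) * lam + δ * lam ^ 2

/-- The eigenvalues of a Hermitian real matrix, sorted in increasing order (with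
multiplicity). -/
noncomputable def eigList {n : ℕ} (A : Matrix (Fin n) (Fin n) ℝ) (hA : A.IsHermitian) :
    List ℝ :=
  (Multiset.map hA.eigenvalues Finset.univ.val).sort (· ≤ ·)

/-- Second-smallest eigenvalue. -/
noncomputable def lamUp2 {n : ℕ} (A : Matrix (Fin n) (Fin n) ℝ) (hA : A.IsHermitian) : ℝ :=
  (eigList A hA).getD 1 0

/-- Largest eigenvalue. -/
noncomputable def lamDown1 {n : ℕ} (A : Matrix (Fin n) (Fin n) ℝ) (hA : A.IsHermitian) : ℝ :=
  (eigList A hA).reverse.getD 0 0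

/-- Second-largest eigenvalue. -/
noncomputable def lamDown2 {n : ℕ} (A : Matrix (Fin n) (Fin n) ℝ) (hA : A.IsHermitian) : ℝ :=
  (eigList A hA).reverse.getD 1 0

/-!
Diagonalising `L` shows that `M = q(δ, L)` is the continuous functional calculus `cfc (q δ) L`, so
its eigenvalues are the `q δ`-images of those of `L`. The simple eigenvalue `0` of `L` goes to `0`
and every other eigenvalue, lying in `(0, 2]`, goes to a negative number; hence `0` is the top
eigenvalue of `M`, and the second one is `q δ x` for some eigenvalue `x ∈ [λ↑₂(L), 2]` of `L`. It
is at least `q δ (λ↑₂(L))` because that is an eigenvalue of `M` other than the top one, and at most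
`max (q δ (λ↑₂(L))) (q δ 2)` by convexity of `q δ`, with `q δ 2 = -2`.
-/

namespace Multiset

section Sorting

variable {α : Type*} (r : α → α → Prop) [DecidableRel r] [IsTrans α r] [Std.Antisymm r]
  [Std.Total r]

theorem getD_sort_zero_mem {s : Multiset α} (hs : s ≠ 0) (d : α) : (s.sort r).getD 0 d ∈ s := by
  have hlen : 0 < (s.sort r).length := by simpa [Multiset.card_pos] using hs
  rw [List.getD_eq_getElem _ _ hlen, ← mem_sort r]
  exact List.getElem_mem hlen

theorem rel_getD_sort_zero {s : Multiset α} (d : α) {x : α} (hx : x ∈ s) :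
    r ((s.sort r).getD 0 d) x := by
  rw [← mem_sort r] at hx
  have hsorted := pairwise_sort s r
  cases h : s.sort r with
  | nil => simp [h] at hx
  | cons a l =>
    rw [h, List.mem_cons] at hx
    rw [h, List.pairwise_cons] at hsorted
    rcases hx with rfl | hx
    · exact (Std.Total.total x x).elim id id
    · exact hsorted.1 x hx

end Sorting

theorem reverse_sort_le {α : Type*} [LinearOrder α] (s : Multiset α) :
    (s.sort (· ≤ ·)).reverse = s.sort (· ≥ ·) := by
  have hperm : List.Perm (s.sort (· ≤ ·)) (s.sort (· ≥ ·)) := coe_eq_coe.mp (by simp)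
  rw [hperm.eq_reverse_of_sortedLE_of_sortedGE
    (List.sortedLE_iff_pairwise.mpr (pairwise_sort _ _))
    (List.sortedGE_iff_pairwise.mpr (pairwise_sort _ _)), List.reverse_reverse]

theorem exists_eq_cons_of_count_eq_one {α : Type*} [DecidableEq α] {s : Multiset α} {a : α}
    (h : count a s = 1) : ∃ t, s = a ::ₘ t ∧ a ∉ t :=
  ⟨s.erase a, (cons_erase (count_pos.mp (by omega))).symm,
    count_eq_zero.mp (by rw [count_erase_self, h])⟩

end Multiset

section Eigenvalues

variable {n : ℕ} {A : Matrix (Fin n) (Fin n) ℝ} (hA : A.IsHermitian)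

theorem lamUp2_eq_of_eigenvalues_eq_cons {a : ℝ} {s : Multiset ℝ}
    (h : univ.val.map hA.eigenvalues = a ::ₘ s) (ha : ∀ x ∈ s, a ≤ x) :
    lamUp2 A hA = (s.sort (· ≤ ·)).getD 0 0 := by
  rw [lamUp2, eigList, h, Multiset.sort_cons _ _ _ ha]
  rfl

theorem lamDown_eq_of_eigenvalues_eq_cons {a : ℝ} {s : Multiset ℝ}
    (h : univ.val.map hA.eigenvalues = a ::ₘ s) (ha : ∀ x ∈ s, x ≤ a) :
    lamDown1 A hA = a ∧ lamDown2 A hA = (s.sort (· ≥ ·)).getD 0 0 := by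
  have hsort : (eigList A hA).reverse = a :: s.sort (· ≥ ·) := by
    rw [eigList, h, Multiset.reverse_sort_le, Multiset.sort_cons _ _ _ ha]
  exact ⟨by rw [lamDown1, hsort]; rfl, by rw [lamDown2, hsort]; rfl⟩

theorem Matrix.IsHermitian.exists_eigenvalues_eq_zero_cons {b : ℝ}
    (hspec : ∀ i, hA.eigenvalues i ∈ Set.Icc 0 b)
    (hker : #{i | hA.eigenvalues i = 0} = 1) :
    ∃ s, univ.val.map hA.eigenvalues = 0 ::ₘ s ∧ ∀ x ∈ s, x ∈ Set.Ioc 0 b := by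
  obtain ⟨s, hs, hs0⟩ := Multiset.exists_eq_cons_of_count_eq_one (s := univ.val.map hA.eigenvalues)
    (a := 0) (by rw [Multiset.count_map, ← hker, card_def, filter_val]; simp_rw [eq_comm])
  refine ⟨s, hs, fun x hx => ?_⟩
  obtain ⟨i, -, rfl⟩ := Multiset.mem_map.mp (hs ▸ Multiset.mem_cons_of_mem hx)
  exact ⟨(hspec i).1.lt_of_ne (ne_of_mem_of_not_mem hx hs0).symm, (hspec i).2⟩

end Eigenvalues

theorem Matrix.IsHermitian.eigenvalues_cfc {n 𝕜 : Type*} [Fintype n] [DecidableEq n] [RCLike 𝕜]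
    {A : Matrix n n 𝕜} (hA : A.IsHermitian) (f : ℝ → ℝ) (hf : (cfc f A).IsHermitian) :
    univ.val.map hf.eigenvalues = univ.val.map (f ∘ hA.eigenvalues) := by
  apply Multiset.map_injective (RCLike.ofReal_injective (K := 𝕜))
  rw [Multiset.map_map, Multiset.map_map, ← hf.roots_charpoly_eq_eigenvalues, hA.charpoly_cfc_eq,
    Polynomial.roots_prod _ _ (by simp [prod_ne_zero_iff, Polynomial.X_sub_C_ne_zero])]
  simp [Function.comp_def]

section DampingPolynomial

theorem q_zero (δ : ℝ) : q δ 0 = 0 := by simp [q]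

theorem q_two (δ : ℝ) : q δ 2 = -2 := by simp [q]; ring

theorem q_neg {δ x : ℝ} (hδ : 0 ≤ δ) (hx : 0 < x) (hx2 : x ≤ 2) : q δ x < 0 := by
  have : q δ x = -x * (1 + δ * (2 - x)) := by simp only [q]; ring
  rw [this]
  nlinarith [mul_nonneg hδ (sub_nonneg.mpr hx2)]

theorem convexOn_q {δ : ℝ} (hδ : 0 ≤ δ) : ConvexOn ℝ Set.univ (q δ) :=
  ((LinearMap.mulLeft ℝ (-(1 + 2 * δ))).convexOn convex_univ).add
    (ConvexOn.smul hδ even_two.convexOn_pow)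

theorem smul_add_smul_mul_self_eq_cfc_q {ι : Type*} [Fintype ι] [DecidableEq ι]
    {L : Matrix ι ι ℝ} (hL : L.IsHermitian) (δ : ℝ) :
    (-(1 + 2 * δ)) • L + δ • (L * L) = cfc (q δ) L := by
  open Polynomial in
  have hq : q δ = fun x => (C (-(1 + 2 * δ)) * X + C δ * X ^ 2).eval x := by
    ext x; simp [q]
  rw [hq, cfc_polynomial _ L hL.isSelfAdjoint]
  simp [Algebra.smul_def, sq]

end DampingPolynomial

theorem damping_rate_bounds {n : ℕ} (hn : 2 ≤ n)
    (L : Matrix (Fin n) (Fin n) ℝ) (hL : L.IsHermitian)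
    (hspec : ∀ i, hL.eigenvalues i ∈ Set.Icc (0 : ℝ) 2)
    (hker : (Finset.univ.filter fun i => hL.eigenvalues i = 0).card = 1)
    (δ : ℝ) (hδ : 0 < δ)
    (M : Matrix (Fin n) (Fin n) ℝ)
    (hMdef : M = (-(1 + 2 * δ)) • L + δ • (L * L)) (hM : M.IsHermitian)
    (D B : Matrix (Fin n) (Fin n) ℝ) (hB : IsUnit B) (hD : D = B⁻¹ * M * B) :
    D.charpoly = M.charpoly ∧
    lamDown1 M hM = 0 ∧
    q δ (lamUp2 L hL) ≤ lamDown2 M hM ∧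
    lamDown2 M hM ≤ max (q δ (lamUp2 L hL)) (-2) := by
  have hcharpoly : D.charpoly = M.charpoly := by
    simpa [hD] using charpoly_units_conj' hB.unit M
  obtain rfl : M = cfc (q δ) L := hMdef.trans (smul_add_smul_mul_self_eq_cfc_q hL δ)
  obtain ⟨s, hs, hs_pos⟩ := hL.exists_eigenvalues_eq_zero_cons hspec hker
  have hs_ne : s ≠ 0 := by
    rintro rfl
    have := congrArg Multiset.card hs
    simp at this
    omega
  have hspecM : univ.val.map hM.eigenvalues = 0 ::ₘ s.map (q δ) := by
    rw [hL.eigenvalues_cfc, ← Multiset.map_map, hs, Multiset.map_cons, q_zero]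
  have hneg : ∀ y ∈ s.map (q δ), y ≤ 0 := Multiset.forall_mem_map_iff.mpr fun x hx =>
    (q_neg hδ.le (hs_pos x hx).1 (hs_pos x hx).2).le
  obtain ⟨hdown1, hdown2⟩ := lamDown_eq_of_eigenvalues_eq_cons hM hspecM hneg
  rw [lamUp2_eq_of_eigenvalues_eq_cons hL hs fun x hx => (hs_pos x hx).1.le, hdown2]
  have hμ := Multiset.getD_sort_zero_mem (· ≤ ·) hs_ne 0
  obtain ⟨x, hx, hqx⟩ := Multiset.mem_map.mp
    (Multiset.getD_sort_zero_mem (· ≥ ·) ((Multiset.map_eq_zero (f := q δ)).not.mpr hs_ne) 0)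
  refine ⟨hcharpoly, hdown1,
    Multiset.rel_getD_sort_zero (· ≥ ·) 0 (Multiset.mem_map_of_mem (q δ) hμ), ?_⟩
  rw [← hqx, ← q_two δ]
  exact (convexOn_q hδ.le).le_max_of_mem_Icc trivial trivial
    ⟨Multiset.rel_getD_sort_zero _ _ hx, (hs_pos x hx).2⟩
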